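/- arXiv:2108.01180 — 4 statements merged into one kernel-verified Lean document; each statement's English description precedes it below -/
import Mathlib

section
/- Let α = (S_g, α_g)_{g∈𝒢} be a partial action of a connected groupoid 𝒢 on a ring S, let y, z ∈ 𝒢₀, and let τ ∈ 𝒢(y,z) be such that S_{τ⁻¹} = S_y and S_τ = S_z. Then S_g = S_{gτ} for every g ∈ 𝒢 with s(g) = z. In particular, if α is unital with S_g = S·1_g for central idempotents 1_g, then 1_g = 1_{gτ} for every g ∈ 𝒢 with s(g) = z. -/
open CategoryTheory

namespace PaperGalois

/-- A partial action `α = (S_g, α_g)_{g ∈ 𝒢}` of a groupoid (encoded as a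
`CategoryTheory.Groupoid` structure on `Obj`) on a ring `S`: for each morphism
`g : a ⟶ b` (source `a`, target `b`), `D g` is the two-sided ideal `S_g` of `S`
(contained in `S_{t(g)} = D (𝟙 b)`, hence an ideal of `S_{t(g)}`), and
`act g : S → S` encodes the ring isomorphism `α_g : S_{g⁻¹} → S_g`
(its values outside `S_{g⁻¹}` are irrelevant for the axioms).  The axioms are those of
Definition 2.1: `α_x = id_{S_x}` for objects `x`,
`α_h⁻¹(S_{g⁻¹} ∩ S_h) ⊆ S_{(gh)⁻¹}` and `α_g ∘ α_h = α_{gh}` on that domain. -/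
structure PartialAction (Obj : Type*) [Groupoid Obj] (S : Type*) [Ring S] where
  D : ∀ ⦃a b : Obj⦄, (a ⟶ b) → TwoSidedIdeal S
  act : ∀ ⦃a b : Obj⦄, (a ⟶ b) → S → S
  D_le : ∀ ⦃a b : Obj⦄ (g : a ⟶ b), D g ≤ D (𝟙 b)
  act_mem : ∀ ⦃a b : Obj⦄ (g : a ⟶ b), ∀ s ∈ D (Groupoid.inv g), act g s ∈ D g
  act_add : ∀ ⦃a b : Obj⦄ (g : a ⟶ b), ∀ s ∈ D (Groupoid.inv g), ∀ t ∈ D (Groupoid.inv g),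
      act g (s + t) = act g s + act g t
  act_mul : ∀ ⦃a b : Obj⦄ (g : a ⟶ b), ∀ s ∈ D (Groupoid.inv g), ∀ t ∈ D (Groupoid.inv g),
      act g (s * t) = act g s * act g t
  act_inv_act : ∀ ⦃a b : Obj⦄ (g : a ⟶ b), ∀ s ∈ D (Groupoid.inv g),
      act (Groupoid.inv g) (act g s) = s
  act_act_inv : ∀ ⦃a b : Obj⦄ (g : a ⟶ b), ∀ s ∈ D g, act g (act (Groupoid.inv g) s) = s
  act_id : ∀ (a : Obj), ∀ s ∈ D (𝟙 a), act (𝟙 a) s = s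
  dom_comp : ∀ ⦃a b c : Obj⦄ (h : a ⟶ b) (g : b ⟶ c), ∀ s ∈ D (Groupoid.inv h),
      act h s ∈ D (Groupoid.inv g) → s ∈ D (Groupoid.inv (h ≫ g))
  act_comp : ∀ ⦃a b c : Obj⦄ (h : a ⟶ b) (g : b ⟶ c), ∀ s ∈ D (Groupoid.inv h),
      act h s ∈ D (Groupoid.inv g) → act g (act h s) = act (h ≫ g) s

/-- **Proposition 2.4.**  Let `α` be a partial action of a connected groupoid `𝒢` on a
ring `S`, let `y, z ∈ 𝒢₀` and let `τ ∈ 𝒢(y,z)` be such that `S_{τ⁻¹} = S_y` and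
`S_τ = S_z`.  Then `S_g = S_{gτ}` for every `g ∈ 𝒢` with `s(g) = z` (here
`gτ = τ ≫ g`).  In particular, if `α` is unital, i.e. every `S_g` equals `S·1_g` for a
central idempotent `1_g` of `S`, then `1_g = 1_{gτ}` for every such `g`. -/
theorem ideal_eq_of_transversal
    {Obj : Type*} [Groupoid Obj] {S : Type*} [Ring S]
    (α : PartialAction Obj S)
    (hconn : ∀ a b : Obj, Nonempty (a ⟶ b))
    (y z : Obj) (τ : y ⟶ z)
    (h1 : α.D (Groupoid.inv τ) = α.D (𝟙 y)) (h2 : α.D τ = α.D (𝟙 z)) :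
    (∀ (w : Obj) (g : z ⟶ w), α.D (τ ≫ g) = α.D g) ∧
    (∀ e : ∀ ⦃a b : Obj⦄, (a ⟶ b) → S,
      (∀ ⦃a b : Obj⦄ (g : a ⟶ b),
          IsIdempotentElem (e g) ∧ (∀ s : S, e g * s = s * e g) ∧
          (∀ s : S, s ∈ α.D g ↔ ∃ u : S, s = u * e g)) →
      ∀ (w : Obj) (g : z ⟶ w), e (τ ≫ g) = e g) := by
  have ginv_inv : ∀ ⦃a b : Obj⦄ (f : a ⟶ b), Groupoid.inv (Groupoid.inv f) = f := by
    intro a b f; simp [Groupoid.inv_eq_inv]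
  have key : ∀ (w : Obj) (g : z ⟶ w), α.D (τ ≫ g) = α.D g := by
    intro w g
    apply le_antisymm
    · intro s hs
      have hs' : s ∈ α.D (Groupoid.inv (Groupoid.inv (τ ≫ g))) := by rwa [ginv_inv]
      have hmem : α.act (Groupoid.inv (τ ≫ g)) s ∈ α.D (Groupoid.inv τ) := by
        have := α.act_mem (Groupoid.inv (τ ≫ g)) s hs'
        have hle : α.D (Groupoid.inv (τ ≫ g)) ≤ α.D (𝟙 y) := α.D_le _
        rw [h1]; exact hle this
      have := α.dom_comp (Groupoid.inv (τ ≫ g)) τ s hs' hmem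
      have hcomp : Groupoid.inv (τ ≫ g) ≫ τ = Groupoid.inv g := by
        simp [Groupoid.inv_eq_inv]
      rwa [hcomp, ginv_inv] at this
    · intro s hs
      have hs' : s ∈ α.D (Groupoid.inv (Groupoid.inv g)) := by rwa [ginv_inv]
      have hmem : α.act (Groupoid.inv g) s ∈ α.D (Groupoid.inv (Groupoid.inv τ)) := by
        have := α.act_mem (Groupoid.inv g) s hs'
        have hle : α.D (Groupoid.inv g) ≤ α.D (𝟙 z) := α.D_le _
        rw [ginv_inv, h2]; exact hle this
      have := α.dom_comp (Groupoid.inv g) (Groupoid.inv τ) s hs' hmem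
      have hcomp : Groupoid.inv (Groupoid.inv g ≫ Groupoid.inv τ) = τ ≫ g := by
        simp [Groupoid.inv_eq_inv]
      rwa [hcomp] at this
  refine ⟨key, ?_⟩
  intro e he w g
  obtain ⟨hid1, hc1, hch1⟩ := he (τ ≫ g)
  obtain ⟨hid2, hc2, hch2⟩ := he g
  have m1 : e (τ ≫ g) ∈ α.D g := by
    rw [← key w g]; exact (hch1 _).2 ⟨e (τ ≫ g), hid1.symm⟩
  have m2 : e g ∈ α.D (τ ≫ g) := by
    rw [key w g]; exact (hch2 _).2 ⟨e g, hid2.symm⟩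
  obtain ⟨u, hu⟩ := (hch2 _).1 m1
  obtain ⟨v, hv⟩ := (hch1 _).1 m2
  have e1 : e (τ ≫ g) * e g = e (τ ≫ g) := by
    rw [hu]; rw [mul_assoc, hid2]
  have e2 : e g * e (τ ≫ g) = e g := by
    rw [hv]; rw [mul_assoc, hid1]
  rw [← e1, hc1, e2]

end PaperGalois
end

section
/- Let 𝒢 be a finite groupoid, α a unital partial action of 𝒢 on a commutative ring S with S = ⊕_{y∈𝒢₀} S_y, and let 𝒢 = 𝒢₁ ∪̇ … ∪̇ 𝒢_r be the decomposition of 𝒢 into connected components, where 𝒢_j has object set Z_j. Set S_j := ⊕_{y∈Z_j} S_y and let α_j = (S_g, α_g)_{g∈𝒢_j} be the restriction of α, a partial action of 𝒢_j on S_j. Then S^{α_𝒢} ⊆ S is an α_𝒢-partial Galois extension if and only if S_j^{α_j} ⊆ S_j is an α_j-partial Galois extension for every 1 ≤ j ≤ r. -/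
/-!
Since the `1_y` are orthogonal, `e_Z = ∑_{y ∈ Z} 1_y` is the unit of `S_Z`, and for `g` inside the
component `Z` one has `α_g(e_Z) = 1_g` and `e_Z · 1_g = 1_g`; so multiplying a coordinate system of
`α` by `e_Z` yields one of `α_Z`. Conversely, an element `b ∈ S_Z` satisfies `α_g(b) = 0` whenever
`s(g) ∉ Z`, so the coordinate systems of all components, put side by side, form one of `α`.
-/

open CategoryTheory

namespace PaperGalois

/-- A unital partial action of a groupoid (with object/morphism data given by a
`CategoryTheory.Groupoid` structure on `Obj`) on a commutative ring `S`.
For a morphism `g : a ⟶ b` (source `a`, target `b`), `e g` is the central idempotent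
with `S_g = S • e g`, and `act g s` encodes `α_g(s · 1_{g⁻¹})`. -/
structure UPA (Obj : Type*) [Groupoid Obj] (S : Type*) [CommRing S] where
  e : ∀ ⦃a b : Obj⦄, (a ⟶ b) → S
  act : ∀ ⦃a b : Obj⦄, (a ⟶ b) → S → S
  idem : ∀ ⦃a b : Obj⦄ (g : a ⟶ b), e g * e g = e g
  e_le : ∀ ⦃a b : Obj⦄ (g : a ⟶ b), e g * e (𝟙 b) = e g
  act_proj : ∀ ⦃a b : Obj⦄ (g : a ⟶ b) (s : S), act g (s * e (Groupoid.inv g)) = act g s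
  act_mem : ∀ ⦃a b : Obj⦄ (g : a ⟶ b) (s : S), act g s * e g = act g s
  act_add : ∀ ⦃a b : Obj⦄ (g : a ⟶ b) (s t : S), act g (s + t) = act g s + act g t
  act_mul : ∀ ⦃a b : Obj⦄ (g : a ⟶ b) (s t : S), act g (s * t) = act g s * act g t
  act_unit : ∀ ⦃a b : Obj⦄ (g : a ⟶ b), act g (e (Groupoid.inv g)) = e g
  act_id : ∀ (a : Obj) (s : S), act (𝟙 a) s = s * e (𝟙 a)
  act_inv : ∀ ⦃a b : Obj⦄ (g : a ⟶ b) (s : S),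
      act (Groupoid.inv g) (act g s) = s * e (Groupoid.inv g)
  act_comp : ∀ ⦃a b c : Obj⦄ (h : a ⟶ b) (g : b ⟶ c) (s : S),
      act g (act h s) = act (h ≫ g) s * e g

namespace UPA

variable {Obj : Type*} [Groupoid Obj] {S : Type*} [CommRing S] (α : UPA Obj S)

lemma act_zero ⦃a b : Obj⦄ (g : a ⟶ b) : α.act g 0 = 0 := by
  have h := α.act_add g 0 0
  rw [add_zero] at h
  exact (left_eq_add.mp h)

lemma act_neg ⦃a b : Obj⦄ (g : a ⟶ b) (s : S) : α.act g (-s) = -(α.act g s) := by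
  have h := α.act_add g s (-s)
  rw [add_neg_cancel, α.act_zero] at h
  exact (eq_neg_of_add_eq_zero_right h.symm)

lemma act_one ⦃a b : Obj⦄ (g : a ⟶ b) : α.act g 1 = α.e g := by
  have h := α.act_proj g 1
  rw [one_mul, α.act_unit] at h
  exact h.symm

lemma act_e_src ⦃a b : Obj⦄ (g : a ⟶ b) : α.act g (α.e (𝟙 a)) = α.e g := by
  have h1 : α.e (𝟙 a) * α.e (Groupoid.inv g) = α.e (Groupoid.inv g) := by
    rw [mul_comm]; exact α.e_le (Groupoid.inv g)
  have h2 := α.act_proj g (α.e (𝟙 a))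
  rw [h1, α.act_unit] at h2
  exact h2.symm

/-- The set of `α`-invariant elements of `S` relative to a subgroupoid `H`:
`S^{α_H} = {s ∈ S : α_h(s·1_{h⁻¹}) = s·1_h for all h ∈ H}`. -/
def invSet (H : Subgroupoid Obj) : Set S :=
  {s : S | ∀ ⦃a b : Obj⦄ (h : a ⟶ b), h ∈ H.arrows a b → α.act h s = s * α.e h}

/-- The invariants `S_y^{α_A}` of the corner ring `S_y = S·1_y` under a set `A`
of loops at `y`. -/
def grpInvSet (y : Obj) (A : Set (y ⟶ y)) : Set S :=
  {s : S | s * α.e (𝟙 y) = s ∧ ∀ g ∈ A, α.act g s = s * α.e g}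

/-- The arrows `a ⟶ b` of the groupoid acting trivially on the subset `T ⊆ S`;
for `T` a subring this gives `𝒢_T`. -/
def fixingSet (T : Set S) (a b : Obj) : Set (a ⟶ b) :=
  {g : a ⟶ b | ∀ t ∈ T, α.act g t = t * α.e g}

/-- `⊕_{y ∈ Z} S_y`, the part of `S` supported on a set `Z` of objects. -/
def partSet (Z : Set Obj) : Set S :=
  {s : S | ∀ y : Obj, y ∉ Z → s * α.e (𝟙 y) = 0}

/-- `T·1_y ⊆ S_y` for a subset `T ⊆ S`. -/
def cornerSet (T : Set S) (y : Obj) : Set S :=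
  (fun t => t * α.e (𝟙 y)) '' T

/-- `T' ⊆ S_y` is `α_{𝒢(y,z)}`-strong. -/
def strongAt (T' : Set S) (a b : Obj) : Prop :=
  ∀ g h : a ⟶ b, (h ≫ Groupoid.inv g) ∉ α.fixingSet T' a a →
    ∀ f : S, f * f = f → f ≠ 0 → (f * α.e g = f ∨ f * α.e h = f) →
      ∃ t ∈ T', α.act g t * f ≠ α.act h t * f

/-- `T ⊆ S` is `α`-strong. -/
def IsStrong (T : Set S) : Prop :=
  ∀ a b : Obj, α.strongAt (α.cornerSet T a) a b

/-- Existence of a partial Galois coordinate system for the restriction of `α` to the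
subgroupoid `H` acting on `S_H ⊆ S` (for `H = ⊤`, `Sub = univ` this says that
`S^{α_𝒢} ⊆ S` is an `α_𝒢`-partial Galois extension). -/
def IsGaloisCoordSystem (H : Subgroupoid Obj) (Sub : Set S) : Prop :=
  ∃ (m : ℕ) (av bv : Fin m → S),
    (∀ i, av i ∈ Sub) ∧ (∀ i, bv i ∈ Sub) ∧
    (∀ ⦃a b : Obj⦄ (g : a ⟶ b), g ∈ H.arrows a b → a ≠ b →
        ∑ i, av i * α.act g (bv i) = 0) ∧
    (∀ (a : Obj) (g : a ⟶ a), g ∈ H.arrows a a → g ≠ 𝟙 a →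
        ∑ i, av i * α.act g (bv i) = 0) ∧
    (∀ a : Obj, a ∈ H.objs → ∑ i, av i * α.act (𝟙 a) (bv i) = α.e (𝟙 a))

/-- Group-type condition for the restriction of `α` to `H`, at the base object `u`:
there is a transversal (inside `H`) from `u` to every object of the `H`-component of `u`
whose ideals are as large as possible. -/
def IsGroupTypeAt (H : Subgroupoid Obj) (u : Obj) : Prop :=
  ∃ σ : ∀ v : Obj, (H.arrows u v).Nonempty → (u ⟶ v),
    (∀ v hv, σ v hv ∈ H.arrows u v) ∧
    (∀ h, σ u h = 𝟙 u) ∧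
    (∀ v hv, α.e (Groupoid.inv (σ v hv)) = α.e (𝟙 u) ∧ α.e (σ v hv) = α.e (𝟙 v))

/-- The restriction `α_H` of `α` to the subgroupoid `H` is of group-type. -/
def IsGroupType (H : Subgroupoid Obj) : Prop :=
  ∀ u ∈ H.objs, α.IsGroupTypeAt H u

end UPA

structure SubCorner (S : Type*) [CommRing S] where
  carrier : Set S
  unit : S
  unit_mem : unit ∈ carrier
  mul_unit : ∀ s ∈ carrier, s * unit = s
  add_mem : ∀ ⦃s t : S⦄, s ∈ carrier → t ∈ carrier → s + t ∈ carrier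
  mul_mem : ∀ ⦃s t : S⦄, s ∈ carrier → t ∈ carrier → s * t ∈ carrier
  neg_mem : ∀ ⦃s : S⦄, s ∈ carrier → -s ∈ carrier
  zero_mem : (0 : S) ∈ carrier

namespace SubCorner

variable {S : Type*} [CommRing S]

lemma nsmul_mem (P : SubCorner S) (n : ℕ) {s : S} (hs : s ∈ P.carrier) :
    n • s ∈ P.carrier := by
  induction n with
  | zero => simpa using P.zero_mem
  | succ n ih => rw [succ_nsmul]; exact P.add_mem ih hs

lemma zsmul_mem (P : SubCorner S) (n : ℤ) {s : S} (hs : s ∈ P.carrier) :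
    n • s ∈ P.carrier := by
  cases n with
  | ofNat n => simpa [natCast_zsmul] using P.nsmul_mem n hs
  | negSucc n => rw [negSucc_zsmul]; exact P.neg_mem (P.nsmul_mem (n+1) hs)

instance (P : SubCorner S) : CommRing ↥P.carrier where
  add a b := ⟨a.1 + b.1, P.add_mem a.2 b.2⟩
  mul a b := ⟨a.1 * b.1, P.mul_mem a.2 b.2⟩
  neg a := ⟨-a.1, P.neg_mem a.2⟩
  zero := ⟨0, P.zero_mem⟩
  one := ⟨P.unit, P.unit_mem⟩
  add_assoc a b c := Subtype.ext (add_assoc _ _ _)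
  zero_add a := Subtype.ext (zero_add _)
  add_zero a := Subtype.ext (add_zero _)
  add_comm a b := Subtype.ext (add_comm _ _)
  mul_assoc a b c := Subtype.ext (mul_assoc _ _ _)
  one_mul a := Subtype.ext (by
    show P.unit * a.1 = a.1
    rw [mul_comm]; exact P.mul_unit a.1 a.2)
  mul_one a := Subtype.ext (P.mul_unit a.1 a.2)
  left_distrib a b c := Subtype.ext (left_distrib _ _ _)
  right_distrib a b c := Subtype.ext (right_distrib _ _ _)
  mul_comm a b := Subtype.ext (mul_comm _ _)
  zero_mul a := Subtype.ext (zero_mul _)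
  mul_zero a := Subtype.ext (mul_zero _)
  neg_add_cancel a := Subtype.ext (neg_add_cancel _)
  nsmul n a := ⟨n • a.1, P.nsmul_mem n a.2⟩
  nsmul_zero a := Subtype.ext (zero_nsmul _)
  nsmul_succ n a := Subtype.ext (succ_nsmul _ _)
  zsmul n a := ⟨n • a.1, P.zsmul_mem n a.2⟩
  zsmul_zero' a := Subtype.ext (zero_zsmul _)
  zsmul_succ' n a := Subtype.ext (by
    show ((n.succ : ℤ)) • a.1 = (n : ℤ) • a.1 + a.1
    rw [Int.natCast_succ, add_zsmul, one_zsmul])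
  zsmul_neg' n a := Subtype.ext (by
    show (Int.negSucc n) • a.1 = -(((n.succ : ℤ)) • a.1)
    rw [negSucc_zsmul]
    norm_cast)

def incl {P Q : SubCorner S} (hle : P.carrier ⊆ Q.carrier) (hu : P.unit = Q.unit) :
    ↥P.carrier →+* ↥Q.carrier where
  toFun a := ⟨a.1, hle a.2⟩
  map_one' := Subtype.ext hu
  map_mul' _ _ := rfl
  map_zero' := rfl
  map_add' _ _ := rfl

def IsSepExt (P Q : SubCorner S) (hle : P.carrier ⊆ Q.carrier) (hu : P.unit = Q.unit) : Prop :=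
  letI : Algebra ↥P.carrier ↥Q.carrier := (incl hle hu).toAlgebra
  ∃ ε : TensorProduct ↥P.carrier ↥Q.carrier ↥Q.carrier,
    (∀ t : ↥Q.carrier,
        (TensorProduct.tmul ↥P.carrier t (1 : ↥Q.carrier)) * ε
          = ε * (TensorProduct.tmul ↥P.carrier (1 : ↥Q.carrier) t)) ∧
    LinearMap.mul' ↥P.carrier ↥Q.carrier ε = 1

end SubCorner

/-- A `Subring` of `S`, seen as a corner subring with identity `1`. -/
def Subring.toSC {S : Type*} [CommRing S] (T : Subring S) : SubCorner S where
  carrier := (T : Set S)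
  unit := 1
  unit_mem := T.one_mem
  mul_unit := fun s _ => mul_one s
  add_mem := fun _ _ hs ht => T.add_mem hs ht
  mul_mem := fun _ _ hs ht => T.mul_mem hs ht
  neg_mem := fun _ hs => T.neg_mem hs
  zero_mem := T.zero_mem

namespace UPA

variable {Obj : Type*} [Groupoid Obj] {S : Type*} [CommRing S] (α : UPA Obj S)

lemma invSet_one_mem (H : Subgroupoid Obj) : (1 : S) ∈ α.invSet H :=
  fun _ _ h _ => by rw [α.act_one h, one_mul]

lemma invSet_zero_mem (H : Subgroupoid Obj) : (0 : S) ∈ α.invSet H :=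
  fun _ _ h _ => by rw [α.act_zero h, zero_mul]

lemma invSet_add_mem (H : Subgroupoid Obj) {s t : S} (hs : s ∈ α.invSet H)
    (ht : t ∈ α.invSet H) : s + t ∈ α.invSet H :=
  fun _ _ h hH => by rw [α.act_add h, hs h hH, ht h hH, add_mul]

lemma invSet_mul_mem (H : Subgroupoid Obj) {s t : S} (hs : s ∈ α.invSet H)
    (ht : t ∈ α.invSet H) : s * t ∈ α.invSet H :=
  fun _ _ h hH => by
    rw [α.act_mul h, hs h hH, ht h hH, mul_mul_mul_comm, α.idem h]

lemma invSet_neg_mem (H : Subgroupoid Obj) {s : S} (hs : s ∈ α.invSet H) :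
    -s ∈ α.invSet H :=
  fun _ _ h hH => by rw [α.act_neg h, hs h hH, neg_mul]

/-- The subring of invariants `S^{α_H}` of `S`, a genuine unital subring of `S`. -/
def invariantsSubring (H : Subgroupoid Obj) : Subring S where
  carrier := α.invSet H
  one_mem' := α.invSet_one_mem H
  zero_mem' := α.invSet_zero_mem H
  add_mem' := α.invSet_add_mem H
  mul_mem' := α.invSet_mul_mem H
  neg_mem' := α.invSet_neg_mem H

/-- `S^{α_H}` as a corner subring of `S` (with identity `1`). -/
def invariantsSC (H : Subgroupoid Obj) : SubCorner S where
  carrier := α.invSet H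
  unit := 1
  unit_mem := α.invSet_one_mem H
  mul_unit := fun s _ => mul_one s
  add_mem := fun _ _ hs ht => α.invSet_add_mem H hs ht
  mul_mem := fun _ _ hs ht => α.invSet_mul_mem H hs ht
  neg_mem := fun _ hs => α.invSet_neg_mem H hs
  zero_mem := α.invSet_zero_mem H

lemma grpInvSet_unit_mem (y : Obj) (A : Set (y ⟶ y)) :
    α.e (𝟙 y) ∈ α.grpInvSet y A := by
  refine ⟨α.idem (𝟙 y), fun g _ => ?_⟩
  rw [α.act_e_src g]
  have : α.e (𝟙 y) * α.e g = α.e g := by rw [mul_comm]; exact α.e_le g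
  rw [this]

/-- `S_y^{α_A}` as a corner subring of `S` (with identity `1_y`). -/
def grpInvSC (y : Obj) (A : Set (y ⟶ y)) : SubCorner S where
  carrier := α.grpInvSet y A
  unit := α.e (𝟙 y)
  unit_mem := α.grpInvSet_unit_mem y A
  mul_unit := fun _ hs => hs.1
  add_mem := fun s t hs ht =>
    ⟨by rw [add_mul, hs.1, ht.1], fun g hg => by
      rw [α.act_add g, hs.2 g hg, ht.2 g hg, add_mul]⟩
  mul_mem := fun s t hs ht =>
    ⟨by rw [mul_assoc, ht.1], fun g hg => by
      rw [α.act_mul g, hs.2 g hg, ht.2 g hg, mul_mul_mul_comm, α.idem g]⟩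
  neg_mem := fun s hs =>
    ⟨by rw [neg_mul, hs.1], fun g hg => by rw [α.act_neg g, hs.2 g hg, neg_mul]⟩
  zero_mem := ⟨zero_mul _, fun g _ => by rw [α.act_zero g, zero_mul]⟩

lemma invSet_le (H : Subgroupoid Obj) :
    α.invSet (Subgroupoid.full (Set.univ : Set Obj)) ⊆ α.invSet H :=
  fun _ hs _ _ h _ => hs h ⟨trivial, trivial⟩

lemma invSet_le_subring {T : Subring S}
    (h : ∀ s ∈ α.invSet (Subgroupoid.full (Set.univ : Set Obj)), s ∈ T) :
    (α.invariantsSC (Subgroupoid.full (Set.univ : Set Obj))).carrier ⊆ (Subring.toSC T).carrier :=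
  h

lemma grpInvSet_le (y : Obj) (A : Set (y ⟶ y)) :
    α.grpInvSet y (Set.univ : Set (y ⟶ y)) ⊆ α.grpInvSet y A :=
  fun _ hs => ⟨hs.1, fun g _ => hs.2 g trivial⟩

end UPA

namespace UPA

variable {Obj : Type*} [Groupoid Obj] {S : Type*} [CommRing S] (α : UPA Obj S)

/-- The conditions of `IsGaloisCoordSystem` on a family `{av i, bv i}` indexed by an arbitrary
finite type. -/
def IsCoordSystem {κ : Type*} [Fintype κ] (H : Subgroupoid Obj) (Sub : Set S)
    (av bv : κ → S) : Prop :=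
  (∀ i, av i ∈ Sub) ∧ (∀ i, bv i ∈ Sub) ∧
    (∀ ⦃a b : Obj⦄ (g : a ⟶ b), g ∈ H.arrows a b → a ≠ b →
        ∑ i, av i * α.act g (bv i) = 0) ∧
    (∀ (a : Obj) (g : a ⟶ a), g ∈ H.arrows a a → g ≠ 𝟙 a →
        ∑ i, av i * α.act g (bv i) = 0) ∧
    (∀ a : Obj, a ∈ H.objs → ∑ i, av i * α.act (𝟙 a) (bv i) = α.e (𝟙 a))

variable {α}

lemma IsCoordSystem.isGaloisCoordSystem {κ : Type*} [Fintype κ] {H : Subgroupoid Obj}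
    {Sub : Set S} {av bv : κ → S} (h : α.IsCoordSystem H Sub av bv) :
    α.IsGaloisCoordSystem H Sub := by
  let E := (Fintype.equivFin κ).symm
  have hsum : ∀ ⦃a b : Obj⦄ (g : a ⟶ b),
      ∑ j, av (E j) * α.act g (bv (E j)) = ∑ i, av i * α.act g (bv i) :=
    fun _ _ g => E.sum_comp fun i => av i * α.act g (bv i)
  obtain ⟨hA, hB, hne, hloop, hid⟩ := h
  exact ⟨_, av ∘ E, bv ∘ E, fun j => hA _, fun j => hB _,
    fun a b g hg hab => (hsum g).trans (hne g hg hab),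
    fun a g hg hg1 => (hsum g).trans (hloop a g hg hg1),
    fun a ha => (hsum (𝟙 a)).trans (hid a ha)⟩

lemma act_sum {ι : Type*} ⦃a b : Obj⦄ (g : a ⟶ b) (s : ι → S) (Z : Finset ι) :
    α.act g (∑ i ∈ Z, s i) = ∑ i ∈ Z, α.act g (s i) :=
  map_sum (AddMonoidHom.mk' (α.act g) (α.act_add g)) s Z

lemma act_eq_zero_of_mul_e_id_eq_zero ⦃a b : Obj⦄ (g : a ⟶ b) {t : S}
    (ht : t * α.e (𝟙 a) = 0) : α.act g t = 0 := by
  have : t * α.e (Groupoid.inv g) = 0 := by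
    rw [← α.e_le (Groupoid.inv g), mul_left_comm, ht, mul_zero]
  rw [← α.act_proj g, this, α.act_zero]

section Orthogonal

variable (horth : ∀ y z : Obj, y ≠ z → α.e (𝟙 y) * α.e (𝟙 z) = 0)
include horth

lemma e_id_mul_e_eq_zero ⦃a b : Obj⦄ (g : a ⟶ b) {y : Obj} (hy : y ≠ b) :
    α.e (𝟙 y) * α.e g = 0 := by
  rw [← α.e_le g, mul_left_comm, horth y b hy, mul_zero]

lemma sum_e_id_mul_e {Z : Finset Obj} ⦃a b : Obj⦄ (g : a ⟶ b) (hb : b ∈ Z) :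
    (∑ y ∈ Z, α.e (𝟙 y)) * α.e g = α.e g := by
  rw [Finset.sum_mul, Finset.sum_eq_single_of_mem b hb
    fun y _ hy => e_id_mul_e_eq_zero horth g hy, mul_comm, α.e_le]

lemma act_sum_e_id {Z : Finset Obj} ⦃a b : Obj⦄ (g : a ⟶ b) (ha : a ∈ Z) :
    α.act g (∑ y ∈ Z, α.e (𝟙 y)) = α.e g := by
  rw [act_sum, Finset.sum_eq_single_of_mem a ha fun y _ hy => ?_, α.act_e_src]
  exact α.act_eq_zero_of_mul_e_id_eq_zero g (horth y a hy)

lemma mul_sum_e_id_mem_partSet (Z : Finset Obj) (s : S) :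
    s * ∑ y ∈ Z, α.e (𝟙 y) ∈ α.partSet ↑Z := by
  intro y hy
  rw [mul_assoc, Finset.sum_mul, Finset.sum_eq_zero fun y' hy' =>
    horth y' y (ne_of_mem_of_not_mem hy' hy), mul_zero]

lemma mul_sum_e_id_mul_act {Z : Finset Obj} ⦃a b : Obj⦄ (g : a ⟶ b) (ha : a ∈ Z)
    (hb : b ∈ Z) (s t : S) :
    s * (∑ y ∈ Z, α.e (𝟙 y)) * α.act g (t * ∑ y ∈ Z, α.e (𝟙 y)) = s * α.act g t := by
  rw [α.act_mul, act_sum_e_id horth g ha, ← α.act_mem g t]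
  linear_combination s * α.act g t * α.e g * sum_e_id_mul_e horth g hb +
    s * α.act g t * α.idem g

theorem IsCoordSystem.restrict {κ : Type*} [Fintype κ] {av bv : κ → S}
    (h : α.IsCoordSystem (Subgroupoid.full Set.univ) Set.univ av bv) (Z : Finset Obj) :
    α.IsCoordSystem (Subgroupoid.full ↑Z) (α.partSet ↑Z)
      (fun i => av i * ∑ y ∈ Z, α.e (𝟙 y)) (fun i => bv i * ∑ y ∈ Z, α.e (𝟙 y)) := by
  obtain ⟨-, -, hne, hloop, hid⟩ := h
  have hsum : ∀ ⦃a b : Obj⦄ (g : a ⟶ b), g ∈ (Subgroupoid.full (↑Z : Set Obj)).arrows a b →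
      ∑ i, av i * (∑ y ∈ Z, α.e (𝟙 y)) * α.act g (bv i * ∑ y ∈ Z, α.e (𝟙 y)) =
        ∑ i, av i * α.act g (bv i) := fun _ _ g hg =>
    Finset.sum_congr rfl fun i _ => mul_sum_e_id_mul_act horth g hg.1 hg.2 (av i) (bv i)
  refine ⟨fun i => mul_sum_e_id_mem_partSet horth Z _,
    fun i => mul_sum_e_id_mem_partSet horth Z _,
    fun a b g hg hab => (hsum g hg).trans (hne g ⟨trivial, trivial⟩ hab),
    fun a g hg hg1 => (hsum g hg).trans (hloop a g ⟨trivial, trivial⟩ hg1),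
    fun a ha => ?_⟩
  rw [Subgroupoid.mem_full_objs_iff] at ha
  exact (hsum (𝟙 a) ⟨ha, ha⟩).trans (hid a ⟨𝟙 a, trivial, trivial⟩)

end Orthogonal

/-- The pieces not containing the source of `g` contribute nothing to the sum at `g`. -/
theorem isCoordSystem_of_partition {ι : Type*} [Fintype ι] (c : Obj → ι)
    (hc : ∀ ⦃a b : Obj⦄, (a ⟶ b) → c a = c b) {m : ι → ℕ} {av bv : ∀ i, Fin (m i) → S}
    (h : ∀ i, α.IsCoordSystem (Subgroupoid.full (c ⁻¹' {i})) (α.partSet (c ⁻¹' {i}))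
      (av i) (bv i)) :
    α.IsCoordSystem (Subgroupoid.full Set.univ) Set.univ
      (fun p : Σ i, Fin (m i) => av p.1 p.2) (fun p => bv p.1 p.2) := by
  have hsum : ∀ ⦃a b : Obj⦄ (g : a ⟶ b),
      ∑ p : Σ i, Fin (m i), av p.1 p.2 * α.act g (bv p.1 p.2) =
        ∑ k, av (c a) k * α.act g (bv (c a) k) := by
    intro a b g
    rw [Fintype.sum_sigma, Fintype.sum_eq_single (c a) fun i hi => ?_]
    refine Finset.sum_eq_zero fun k _ => ?_
    rw [α.act_eq_zero_of_mul_e_id_eq_zero g ((h i).2.1 k a (Ne.symm hi)), mul_zero]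
  have hmem : ∀ ⦃a b : Obj⦄ (g : a ⟶ b),
      g ∈ (Subgroupoid.full (c ⁻¹' {c a})).arrows a b := fun a b g =>
    ⟨rfl, (hc g).symm⟩
  refine ⟨fun _ => trivial, fun _ => trivial,
    fun a b g _ hab => (hsum g).trans ((h (c a)).2.2.1 g (hmem g) hab),
    fun a g _ hg1 => (hsum g).trans ((h (c a)).2.2.2.1 a g (hmem g) hg1),
    fun a _ => (hsum (𝟙 a)).trans ((h (c a)).2.2.2.2 a ⟨𝟙 a, hmem (𝟙 a)⟩)⟩

end UPA

/-- **Proposition 2.8 (reduction to connected components).**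
Let `𝒢` be a finite groupoid and `α` a unital partial action of `𝒢` on a commutative ring
`S = ⊕_{y ∈ 𝒢₀} S_y` (the idempotents `1_y` are orthogonal and sum to `1`).  For an object
`z`, the connected component of `z` is the full subgroupoid on
`Z = {y | 𝒢(z,y) ≠ ∅}`, acting on `S_Z = ⊕_{y ∈ Z} S_y` by restriction.
Then `S^{α_𝒢} ⊆ S` is an `α_𝒢`-partial Galois extension if and only if for every component
the invariants form a partial Galois extension of the corresponding restricted action. -/
theorem galois_iff_components_galois
    {Obj : Type*} [Groupoid Obj] [Fintype Obj] [∀ a b : Obj, Finite (a ⟶ b)]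
    {S : Type*} [CommRing S] (α : UPA Obj S)
    (hsum : ∑ y : Obj, α.e (𝟙 y) = 1)
    (horth : ∀ y z : Obj, y ≠ z → α.e (𝟙 y) * α.e (𝟙 z) = 0) :
    α.IsGaloisCoordSystem (Subgroupoid.full (Set.univ : Set Obj)) (Set.univ : Set S) ↔
      ∀ z : Obj,
        α.IsGaloisCoordSystem (Subgroupoid.full {y : Obj | Nonempty (z ⟶ y)})
          (α.partSet {y : Obj | Nonempty (z ⟶ y)}) := by
  classical
  let c : Obj → Quotient (isIsomorphicSetoid Obj) := Quotient.mk _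
  have hc : ∀ ⦃a b : Obj⦄, (a ⟶ b) → c a = c b := fun a b g =>
    Quotient.sound (Nonempty.intro ((Groupoid.isoEquivHom a b).symm g))
  have hcomponent : ∀ z : Obj, c ⁻¹' {c z} = {y : Obj | Nonempty (z ⟶ y)} := fun z =>
    Set.ext fun y => ⟨fun hy => (Quotient.exact hy.symm).map (Groupoid.isoEquivHom z y),
      fun ⟨g⟩ => (hc g).symm⟩
  constructor
  · rintro ⟨m, av, bv, h⟩ z
    rw [← Set.coe_toFinset {y : Obj | Nonempty (z ⟶ y)}]
    exact (UPA.IsCoordSystem.restrict horth h _).isGaloisCoordSystem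
  · intro h
    have hpieces : ∀ i, α.IsGaloisCoordSystem (Subgroupoid.full (c ⁻¹' {i}))
        (α.partSet (c ⁻¹' {i})) :=
      Quotient.ind fun z => (hcomponent z).symm ▸ h z
    choose m av bv hcs using hpieces
    exact (UPA.isCoordSystem_of_partition c hc hcs).isGaloisCoordSystem

end PaperGalois
end

section
/- Under the standing hypotheses, the map Φ_τ : S_x^{α_{𝒢(x)}} → S^{α_𝒢} defined by Φ_τ(a) = Σ_{y∈𝒢₀} α_{τ_y}(a) for all a ∈ S_x^{α_{𝒢(x)}} is a ring isomorphism, where α_{𝒢(x)} = (S_g, α_g)_{g∈𝒢(x)} is the restriction of α to the isotropy group 𝒢(x) acting partially on S_x. -/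
open CategoryTheory

namespace PaperGalois

/-!
Since `S = ⊕_y S_y` with orthogonal identities `1_y`, an element `b` of `S` is the sum of
its components `b·1_y`. The component of `Φ_τ(a)` at `y` is `α_{τ_y}(a)`, so `Φ_τ(a)·1_x = a`
and `Φ_τ` is injective; conversely an invariant `s` satisfies `α_{τ_y}(s·1_x) = s·1_y` because
`S_{τ_y} = S_y`, whence `Φ_τ(s·1_x) = s`. Invariance of `Φ_τ(a)` under `g : c ⟶ d` reduces to
invariance of `a` under the loop `τ_c g τ_d⁻¹` at `x`.
-/

namespace UPA

variable {Obj : Type*} [Groupoid Obj] {S : Type*} [CommRing S] (α : UPA Obj S)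

lemma act_mul_e_target ⦃a b : Obj⦄ (g : a ⟶ b) (s : S) :
    α.act g s * α.e (𝟙 b) = α.act g s := by
  rw [← α.act_mem g s, mul_assoc, α.e_le]

lemma act_mul_e_source ⦃a b : Obj⦄ (g : a ⟶ b) (s : S) :
    α.act g (s * α.e (𝟙 a)) = α.act g s := by
  rw [← α.act_proj g s, ← α.act_proj g (s * _), mul_assoc, mul_comm (α.e (𝟙 a)), α.e_le]

lemma act_e ⦃a b c : Obj⦄ (h : a ⟶ b) (g : b ⟶ c) :
    α.act g (α.e h) = α.e (h ≫ g) * α.e g := by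
  rw [← α.act_e_src h, α.act_comp, α.act_e_src]

lemma act_eq_act_mul_e_of_fixed ⦃a c : Obj⦄ (f t : a ⟶ c) (ht : α.e t = α.e (𝟙 c)) {s : S}
    (hs : α.act (f ≫ Groupoid.inv t) s = s * α.e (f ≫ Groupoid.inv t)) :
    α.act f s = α.act t s * α.e f := by
  have hf : (f ≫ Groupoid.inv t) ≫ t = f := by simp
  have := congrArg (α.act t) hs
  rwa [α.act_comp, hf, ht, act_mul_e_target, α.act_mul, act_e, hf, ht, α.e_le] at this

lemma mem_invSet_full_iff {s : S} :
    s ∈ α.invSet (Subgroupoid.full Set.univ) ↔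
      ∀ ⦃a b : Obj⦄ (g : a ⟶ b), α.act g s = s * α.e g :=
  forall₃_congr fun _ _ _ => ⟨fun h => h ⟨trivial, trivial⟩, fun h _ => h⟩

lemma mem_grpInvSet_univ_iff {x : Obj} {s : S} :
    s ∈ α.grpInvSet x Set.univ ↔
      s * α.e (𝟙 x) = s ∧ ∀ g : x ⟶ x, α.act g s = s * α.e g := by
  simp [grpInvSet]

lemma mul_e_mem_grpInvSet_univ {s : S} (hs : s ∈ α.invSet (Subgroupoid.full Set.univ))
    (x : Obj) : s * α.e (𝟙 x) ∈ α.grpInvSet x Set.univ := by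
  rw [mem_invSet_full_iff] at hs
  refine (α.mem_grpInvSet_univ_iff).2 ⟨by rw [mul_assoc, α.idem], fun g => ?_⟩
  rw [act_mul_e_source, hs, mul_assoc, mul_comm (α.e (𝟙 x)), α.e_le]

variable [Fintype Obj]

lemma sum_mul_e_id (horth : ∀ y z : Obj, y ≠ z → α.e (𝟙 y) * α.e (𝟙 z) = 0)
    (f : Obj → S) (hf : ∀ y, f y * α.e (𝟙 y) = f y) (z : Obj) :
    (∑ y, f y) * α.e (𝟙 z) = f z := by
  rw [Finset.sum_mul, Finset.sum_eq_single z, hf z]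
  · intro y _ hyz
    rw [← hf y, mul_assoc, horth y z hyz, mul_zero]
  · exact fun hz => absurd (Finset.mem_univ z) hz

def phiTau {x : Obj} (τ : ∀ y : Obj, x ⟶ y) (a : S) : S :=
  ∑ y, α.act (τ y) a

variable {x : Obj} (τ : ∀ y : Obj, x ⟶ y)

lemma phiTau_add (a b : S) :
    α.phiTau τ (a + b) = α.phiTau τ a + α.phiTau τ b := by
  simp only [phiTau, α.act_add, Finset.sum_add_distrib]

lemma phiTau_mul_e_id (horth : ∀ y z : Obj, y ≠ z → α.e (𝟙 y) * α.e (𝟙 z) = 0) (a : S) (z : Obj) :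
    α.phiTau τ a * α.e (𝟙 z) = α.act (τ z) a :=
  α.sum_mul_e_id horth _ (fun y => α.act_mul_e_target (τ y) a) z

lemma phiTau_mul (horth : ∀ y z : Obj, y ≠ z → α.e (𝟙 y) * α.e (𝟙 z) = 0) (a b : S) :
    α.phiTau τ (a * b) = α.phiTau τ a * α.phiTau τ b := by
  calc α.phiTau τ (a * b) = ∑ y, α.act (τ y) a * (α.phiTau τ b * α.e (𝟙 y)) := by
        simp only [α.phiTau_mul_e_id τ horth]
        simp only [phiTau, α.act_mul]
    _ = ∑ y, α.act (τ y) a * α.e (𝟙 y) * α.phiTau τ b := by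
        simp only [mul_comm (α.phiTau τ b), mul_assoc]
    _ = α.phiTau τ a * α.phiTau τ b := by
        simp only [act_mul_e_target, phiTau, Finset.sum_mul]

lemma phiTau_mul_e_base (horth : ∀ y z : Obj, y ≠ z → α.e (𝟙 y) * α.e (𝟙 z) = 0)
    (hτx : τ x = 𝟙 x) {a : S} (ha : a * α.e (𝟙 x) = a) :
    α.phiTau τ a * α.e (𝟙 x) = a := by
  rw [phiTau_mul_e_id _ _ horth, hτx, α.act_id, ha]

lemma phiTau_mem_invSet (horth : ∀ y z : Obj, y ≠ z → α.e (𝟙 y) * α.e (𝟙 z) = 0)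
    (hτ : ∀ y : Obj, α.e (τ y) = α.e (𝟙 y)) {a : S}
    (ha : a ∈ α.grpInvSet x Set.univ) :
    α.phiTau τ a ∈ α.invSet (Subgroupoid.full Set.univ) := by
  refine (α.mem_invSet_full_iff).2 fun c d g => ?_
  calc α.act g (α.phiTau τ a) = α.act g (α.act (τ c) a) := by
        rw [← act_mul_e_source, phiTau_mul_e_id _ _ horth]
    _ = α.act (τ c ≫ g) a * α.e g := α.act_comp _ _ _
    _ = α.act (τ d) a * (α.e (τ c ≫ g) * α.e g) := by
        rw [α.act_eq_act_mul_e_of_fixed _ _ (hτ d) (ha.2 _ trivial), mul_assoc]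
    _ = α.act (τ d) a * α.e g := by rw [← act_e, hτ c, act_e_src]
    _ = α.phiTau τ a * α.e g := by
        rw [← phiTau_mul_e_id _ _ horth, mul_assoc, mul_comm (α.e (𝟙 d)), α.e_le]

lemma phiTau_mul_e_base_of_mem_invSet (hsum : ∑ y : Obj, α.e (𝟙 y) = 1)
    (hτ : ∀ y : Obj, α.e (τ y) = α.e (𝟙 y)) {s : S}
    (hs : s ∈ α.invSet (Subgroupoid.full Set.univ)) :
    α.phiTau τ (s * α.e (𝟙 x)) = s := by
  rw [mem_invSet_full_iff] at hs
  simp only [phiTau, act_mul_e_source, hs, hτ, ← Finset.mul_sum, hsum, mul_one]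

end UPA

/-- **Corollary 3.2.**  Standing hypotheses as before.  The map
`Φ_τ : S_x^{α_{𝒢(x)}} → S^{α_𝒢}`, `Φ_τ(a) = Σ_{y ∈ 𝒢₀} α_{τ_y}(a)`, is a ring isomorphism:
it maps `S_x^{α_{𝒢(x)}}` (the invariants of the corner `S_x` under the restricted partial
action of the isotropy group `𝒢(x)`) bijectively onto `S^{α_𝒢}` and preserves addition and
multiplication. -/
theorem phi_tau_ring_iso
    {Obj : Type*} [Groupoid Obj] [Fintype Obj] [∀ a b : Obj, Finite (a ⟶ b)]
    {S : Type*} [CommRing S] (α : UPA Obj S)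
    (hsum : ∑ y : Obj, α.e (𝟙 y) = 1)
    (horth : ∀ y z : Obj, y ≠ z → α.e (𝟙 y) * α.e (𝟙 z) = 0)
    (hconn : ∀ a b : Obj, Nonempty (a ⟶ b))
    (x : Obj) (τ : ∀ y : Obj, x ⟶ y) (hτx : τ x = 𝟙 x)
    (hgt : ∀ y : Obj, α.e (Groupoid.inv (τ y)) = α.e (𝟙 x) ∧ α.e (τ y) = α.e (𝟙 y)) :
    Set.BijOn (fun a : S => ∑ y : Obj, α.act (τ y) a)
        (α.grpInvSet x (Set.univ : Set (x ⟶ x)))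
        (α.invSet (Subgroupoid.full (Set.univ : Set Obj))) ∧
    (∀ a b : S, a ∈ α.grpInvSet x (Set.univ : Set (x ⟶ x)) →
        b ∈ α.grpInvSet x (Set.univ : Set (x ⟶ x)) →
      (∑ y : Obj, α.act (τ y) (a + b)) = (∑ y : Obj, α.act (τ y) a) + ∑ y : Obj, α.act (τ y) b) ∧
    (∀ a b : S, a ∈ α.grpInvSet x (Set.univ : Set (x ⟶ x)) →
        b ∈ α.grpInvSet x (Set.univ : Set (x ⟶ x)) →
      (∑ y : Obj, α.act (τ y) (a * b)) = (∑ y : Obj, α.act (τ y) a) * ∑ y : Obj, α.act (τ y) b) := by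
  have hτ : ∀ y, α.e (τ y) = α.e (𝟙 y) := fun y => (hgt y).2
  have hinj : Set.InjOn (α.phiTau τ) (α.grpInvSet x Set.univ) := fun a ha b hb hab => by
    rw [← α.phiTau_mul_e_base τ horth hτx ha.1, hab, α.phiTau_mul_e_base τ horth hτx hb.1]
  refine ⟨⟨fun a ha => α.phiTau_mem_invSet τ horth hτ ha, hinj, fun s hs => ?_⟩,
    fun a b _ _ => α.phiTau_add τ a b, fun a b _ _ => α.phiTau_mul τ horth a b⟩
  exact ⟨_, α.mul_e_mem_grpInvSet_univ hs x, α.phiTau_mul_e_base_of_mem_invSet τ hsum hτ hs⟩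

end PaperGalois
end

section
/- Under the standing hypotheses, let ℋ ∈ Sub_gt(𝒢) have decomposition into connected components ℋ = ℋ₁ ∪̇ … ∪̇ ℋ_r with ℋ_j the full subgroupoid of ℋ on Y_j, where ℋ₀ = Y₁ ∪̇ … ∪̇ Y_r, let S_j := ⊕_{y∈Y_j} S_y and S^c_ℋ := ⊕_{y∈𝒢₀∖ℋ₀} S_y, and choose y_j ∈ Y_j for each j. Then S^{α_ℋ} = (⊕_{j=1}^r S_j^{α_{ℋ_j}}) ⊕ S^c_ℋ, and this ring is isomorphic to (⊕_{j=1}^r S_{y_j}^{α_{ℋ_j(y_j)}}) ⊕ S^c_ℋ. -/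
/-!
Everything is checked one corner `S_v = S·1_v` at a time: the `1_v` are complete orthogonal
idempotents, so an element is determined by its corners, and invariance under an arrow `a ⟶ b`
only involves the corners at `a` and `b`. This splits `S^{α_ℋ}` along the components `Y_j` and
the complement of `ℋ₀`. On a component, a group-type transversal `σ_v : y_j ⟶ v` with
`1_{σ_v} = 1_v` gives `s·1_v = α_{σ_v}(s·1_{y_j})` for invariant `s`, so `s` is determined by its
corner at `y_j`; conversely an element of `S_{y_j}` fixed by the isotropy of `ℋ` at `y_j` spreads
along the `σ_v` to an invariant element. The isomorphism is multiplication by the idempotent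
`∑_j 1_{y_j} + ∑_{v ∉ ℋ₀} 1_v`.
-/

open CategoryTheory

namespace PaperGalois

/-- The restriction of a subgroupoid `H` to a set `Z` of objects (the full subgroupoid
of `H` on `Z`); for `Z` a connected component of `H` this is the corresponding
connected component subgroupoid `ℋ_j`. -/
def restrictTo {Obj : Type*} [Groupoid Obj] (H : Subgroupoid Obj) (Z : Set Obj) :
    Subgroupoid Obj where
  arrows a b := {g | g ∈ H.arrows a b ∧ a ∈ Z ∧ b ∈ Z}
  inv := by
    intro a b p hp
    exact ⟨H.inv hp.1, hp.2.2, hp.2.1⟩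
  mul := by
    intro a b c p hp q hq
    exact ⟨H.mul hp.1 hq.1, hp.2.1, hq.2.2⟩

structure IsComponentDecomposition {Obj : Type*} [Groupoid Obj] (H : Subgroupoid Obj)
    {ι : Type*} (Y : ι → Set Obj) : Prop where
  subset_objs : ∀ j, Y j ⊆ H.objs
  exists_mem : ∀ u ∈ H.objs, ∃ j, u ∈ Y j
  nonempty_arrows : ∀ j, ∀ u ∈ Y j, ∀ v ∈ Y j, (H.arrows u v).Nonempty
  arrows_eq_empty : ∀ j k, j ≠ k → ∀ u ∈ Y j, ∀ v ∈ Y k, H.arrows u v = ∅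

namespace IsComponentDecomposition

variable {Obj : Type*} [Groupoid Obj] {H : Subgroupoid Obj} {ι : Type*} {Y : ι → Set Obj}

lemma eq_of_mem (hY : IsComponentDecomposition H Y) {v : Obj} {j k : ι} (hj : v ∈ Y j)
    (hk : v ∈ Y k) : j = k := by
  by_contra hjk
  have h := hY.nonempty_arrows j v hj v hj
  rw [hY.arrows_eq_empty j k hjk v hj v hk] at h
  exact Set.not_nonempty_empty h

lemma mem_of_mem_arrows (hY : IsComponentDecomposition H Y) {a b : Obj} {h : a ⟶ b}
    (hh : h ∈ H.arrows a b) {j : ι} (ha : a ∈ Y j) : b ∈ Y j := by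
  obtain ⟨k, hk⟩ := hY.exists_mem b (H.mem_objs_of_tgt hh)
  rcases eq_or_ne j k with rfl | hjk
  · exact hk
  · rw [hY.arrows_eq_empty j k hjk a ha b hk] at hh
    exact absurd hh (Set.notMem_empty h)

end IsComponentDecomposition

namespace UPA

variable {Obj : Type*} [Groupoid Obj] {S : Type*} [CommRing S] (α : UPA Obj S)

lemma act_mul_e_src ⦃a b : Obj⦄ (g : a ⟶ b) (t : S) : α.act g (t * α.e (𝟙 a)) = α.act g t := by
  rw [← α.act_proj g (t * _), ← α.act_proj g t, mul_assoc, mul_comm (α.e (𝟙 a)), α.e_le]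

lemma mul_e_tgt_mul_e ⦃a b : Obj⦄ (g : a ⟶ b) (s : S) : s * α.e (𝟙 b) * α.e g = s * α.e g := by
  rw [mul_assoc, mul_comm (α.e (𝟙 b)), α.e_le]

lemma act_eq_mul_e_congr ⦃a b : Obj⦄ {g : a ⟶ b} {s t : S}
    (ha : s * α.e (𝟙 a) = t * α.e (𝟙 a)) (hb : s * α.e (𝟙 b) = t * α.e (𝟙 b))
    (hs : α.act g s = s * α.e g) : α.act g t = t * α.e g := by
  rw [← α.act_mul_e_src, ← ha, α.act_mul_e_src, hs, ← α.mul_e_tgt_mul_e, hb, α.mul_e_tgt_mul_e]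

lemma mul_e_eq_act_of_mem_invSet {H : Subgroupoid Obj} {s : S} (hs : s ∈ α.invSet H)
    ⦃u v : Obj⦄ {g : u ⟶ v} (hg : g ∈ H.arrows u v) (he : α.e g = α.e (𝟙 v)) :
    s * α.e (𝟙 v) = α.act g (s * α.e (𝟙 u)) := by
  rw [α.act_mul_e_src, hs g hg, he]

lemma act_act_eq_of_fixed_loop ⦃u a b : Obj⦄ (ga : u ⟶ a) (gb : u ⟶ b) (h : a ⟶ b)
    (hga : α.e ga = α.e (𝟙 a)) (hgb : α.e gb = α.e (𝟙 b)) {c : S}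
    (hc : α.act (ga ≫ h ≫ Groupoid.inv gb) c = c * α.e (ga ≫ h ≫ Groupoid.inv gb)) :
    α.act h (α.act ga c) = α.act gb c * α.e h := by
  set k := ga ≫ h ≫ Groupoid.inv gb
  have hk : k ≫ gb = ga ≫ h := by simp [k]
  have hgbh : α.e gb * α.e h = α.e h := by rw [hgb, mul_comm, α.e_le]
  have hgah : α.e (ga ≫ h) * α.e h = α.e h := by
    have := α.act_comp ga h 1
    rwa [α.act_one, α.act_one, hga, α.act_e_src, eq_comm] at this
  have hek : α.act gb (α.e k) = α.e (ga ≫ h) * α.e gb := by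
    rw [← α.act_one k, α.act_comp, α.act_one, hk]
  have hloop : α.act (ga ≫ h) c * α.e gb = α.act gb c * (α.e (ga ≫ h) * α.e gb) := by
    rw [← hek, ← α.act_mul, ← hc, α.act_comp, hk]
  calc α.act h (α.act ga c) = α.act (ga ≫ h) c * α.e gb * α.e h := by
        rw [α.act_comp, mul_assoc, hgbh]
    _ = α.act gb c * (α.e (ga ≫ h) * α.e h) * α.e gb := by rw [hloop]; ring
    _ = α.act gb c * α.e h := by rw [hgah, mul_assoc, mul_comm (α.e h), hgbh]

lemma mul_e_mul_e_of_ne (ho : OrthogonalIdempotents fun u : Obj => α.e (𝟙 u)) {u v : Obj}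
    (huv : u ≠ v) (s : S) : s * α.e (𝟙 u) * α.e (𝟙 v) = 0 := by
  rw [mul_assoc, ho.ortho huv, mul_zero]

lemma mul_e_mem_partSet_singleton (ho : OrthogonalIdempotents fun u : Obj => α.e (𝟙 u))
    (s : S) (u : Obj) : s * α.e (𝟙 u) ∈ α.partSet {u} :=
  fun _ hv => α.mul_e_mul_e_of_ne ho (Ne.symm hv) s

lemma sum_mul_e_of_mem {ι : Type*} [Fintype ι] {Y : ι → Set Obj} {c : ι → S}
    (hc : ∀ k, c k ∈ α.partSet (Y k)) {j : ι} {v : Obj} (hv : ∀ k, k ≠ j → v ∉ Y k) :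
    (∑ k, c k) * α.e (𝟙 v) = c j * α.e (𝟙 v) := by
  rw [Finset.sum_mul, Finset.sum_eq_single j (fun k _ hk => hc k v (hv k hk)) (by simp)]

lemma sum_mul_e_of_forall_notMem {ι : Type*} [Fintype ι] {Y : ι → Set Obj} {c : ι → S}
    (hc : ∀ k, c k ∈ α.partSet (Y k)) {v : Obj} (hv : ∀ k, v ∉ Y k) :
    (∑ k, c k) * α.e (𝟙 v) = 0 :=
  (Finset.sum_mul _ _ _).trans (Finset.sum_eq_zero fun k _ => hc k v (hv k))

section Fintype

variable [Fintype Obj]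

lemma eq_of_forall_mul_e_eq (hsum : ∑ u : Obj, α.e (𝟙 u) = 1) {s t : S}
    (h : ∀ v, s * α.e (𝟙 v) = t * α.e (𝟙 v)) : s = t := by
  rw [← mul_one s, ← mul_one t, ← hsum, Finset.mul_sum, Finset.mul_sum]
  exact Finset.sum_congr rfl fun v _ => h v

lemma sum_mul_e (ho : OrthogonalIdempotents fun u : Obj => α.e (𝟙 u)) (t : Obj → S)
    (ht : ∀ u, t u * α.e (𝟙 u) = t u) (v : Obj) : (∑ u, t u) * α.e (𝟙 v) = t v := by
  rw [Finset.sum_mul, Finset.sum_eq_single v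
    (fun u _ huv => by rw [← ht u, α.mul_e_mul_e_of_ne ho huv]) (by simp), ht]

noncomputable def unitOn (Z : Set Obj) : S := ∑ u, Z.indicator (fun u => α.e (𝟙 u)) u

lemma unitOn_mul_e (ho : OrthogonalIdempotents fun u : Obj => α.e (𝟙 u)) (Z : Set Obj)
    (v : Obj) : α.unitOn Z * α.e (𝟙 v) = Z.indicator (fun u => α.e (𝟙 u)) v := by
  refine α.sum_mul_e ho _ (fun u => ?_) v
  by_cases hu : u ∈ Z
  · rw [Set.indicator_of_mem hu, α.idem]
  · rw [Set.indicator_of_notMem hu, zero_mul]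

lemma mul_unitOn_mul_e_of_mem (ho : OrthogonalIdempotents fun u : Obj => α.e (𝟙 u))
    {Z : Set Obj} {v : Obj} (hv : v ∈ Z) (s : S) :
    s * α.unitOn Z * α.e (𝟙 v) = s * α.e (𝟙 v) := by
  rw [mul_assoc, α.unitOn_mul_e ho, Set.indicator_of_mem hv]

lemma mul_unitOn_mul_e_of_notMem (ho : OrthogonalIdempotents fun u : Obj => α.e (𝟙 u))
    {Z : Set Obj} {v : Obj} (hv : v ∉ Z) (s : S) : s * α.unitOn Z * α.e (𝟙 v) = 0 := by
  rw [mul_assoc, α.unitOn_mul_e ho, Set.indicator_of_notMem hv, mul_zero]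

lemma mul_unitOn_mem_partSet (ho : OrthogonalIdempotents fun u : Obj => α.e (𝟙 u))
    (s : S) (Z : Set Obj) : s * α.unitOn Z ∈ α.partSet Z :=
  fun _ hv => α.mul_unitOn_mul_e_of_notMem ho hv s

lemma unitOn_mul_self (ho : OrthogonalIdempotents fun u : Obj => α.e (𝟙 u)) (Z : Set Obj) :
    α.unitOn Z * α.unitOn Z = α.unitOn Z := by
  refine (Finset.mul_sum _ _ _).trans (Finset.sum_congr rfl fun u _ => ?_)
  by_cases hu : u ∈ Z
  · rw [Set.indicator_of_mem hu, α.unitOn_mul_e ho, Set.indicator_of_mem hu]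
  · rw [Set.indicator_of_notMem hu, mul_zero]

end Fintype

lemma mul_e_mem_grpInvSet {H : Subgroupoid Obj} {Z : Set Obj} {u : Obj} (hu : u ∈ Z) {c : S}
    (hc : c ∈ α.invSet (restrictTo H Z)) : c * α.e (𝟙 u) ∈ α.grpInvSet u (H.arrows u u) :=
  ⟨by rw [mul_assoc, α.idem], fun g hg => by
    rw [α.act_mul_e_src, hc g ⟨hg, hu, hu⟩, α.mul_e_tgt_mul_e]⟩

section Components

variable {H : Subgroupoid Obj} {ι : Type*} [Fintype ι] {Y : ι → Set Obj} {c : ι → S} {d : S}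

lemma sum_add_mul_e_of_mem (hY : IsComponentDecomposition H Y) (hc : ∀ k, c k ∈ α.partSet (Y k))
    (hd : d ∈ α.partSet H.objsᶜ) {j : ι} {v : Obj} (hv : v ∈ Y j) :
    ((∑ k, c k) + d) * α.e (𝟙 v) = c j * α.e (𝟙 v) := by
  rw [add_mul, α.sum_mul_e_of_mem hc fun k hk hvk => hk (hY.eq_of_mem hvk hv),
    hd v fun h => h (hY.subset_objs j hv), add_zero]

lemma sum_add_mul_e_of_notMem (hY : IsComponentDecomposition H Y)
    (hc : ∀ k, c k ∈ α.partSet (Y k)) {v : Obj} (hv : v ∉ H.objs) :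
    ((∑ k, c k) + d) * α.e (𝟙 v) = d * α.e (𝟙 v) := by
  rw [add_mul, α.sum_mul_e_of_forall_notMem hc fun k hk => hv (hY.subset_objs k hk), zero_add]

variable [Fintype Obj]

theorem invSet_eq_sum_components (hsum : ∑ u : Obj, α.e (𝟙 u) = 1)
    (ho : OrthogonalIdempotents fun u : Obj => α.e (𝟙 u)) (hY : IsComponentDecomposition H Y) :
    α.invSet H = {s : S | ∃ (c : ι → S) (d : S),
      (∀ j, c j ∈ α.invSet (restrictTo H (Y j)) ∩ α.partSet (Y j)) ∧
      d ∈ α.partSet H.objsᶜ ∧ s = (∑ j, c j) + d} := by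
  ext s
  constructor
  · intro hs
    have hc : ∀ j, s * α.unitOn (Y j) ∈ α.partSet (Y j) := fun j => α.mul_unitOn_mem_partSet ho _ _
    have hd := α.mul_unitOn_mem_partSet ho s H.objsᶜ
    refine ⟨fun j => s * α.unitOn (Y j), s * α.unitOn H.objsᶜ, fun j => ⟨?_, hc j⟩, hd, ?_⟩
    · rintro a b h ⟨hh, ha, hb⟩
      exact α.act_eq_mul_e_congr (α.mul_unitOn_mul_e_of_mem ho ha s).symm
        (α.mul_unitOn_mul_e_of_mem ho hb s).symm (hs h hh)
    · refine α.eq_of_forall_mul_e_eq hsum fun v => ?_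
      by_cases hv : v ∈ H.objs
      · obtain ⟨j, hj⟩ := hY.exists_mem v hv
        rw [α.sum_add_mul_e_of_mem hY hc hd hj, α.mul_unitOn_mul_e_of_mem ho hj]
      · rw [α.sum_add_mul_e_of_notMem hY hc hv, α.mul_unitOn_mul_e_of_mem ho hv]
  · rintro ⟨c, d, hc, hd, rfl⟩ a b h hh
    obtain ⟨j, ha⟩ := hY.exists_mem a (H.mem_objs_of_src hh)
    have hb := hY.mem_of_mem_arrows hh ha
    have hcY : ∀ k, c k ∈ α.partSet (Y k) := fun k => (hc k).2
    exact α.act_eq_mul_e_congr (α.sum_add_mul_e_of_mem hY hcY hd ha).symm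
      (α.sum_add_mul_e_of_mem hY hcY hd hb).symm ((hc j).1 h ⟨hh, ha, hb⟩)

theorem exists_mem_invSet_restrictTo_mul_e_eq
    (ho : OrthogonalIdempotents fun u : Obj => α.e (𝟙 u)) {Z : Set Obj} {u : Obj} (hu : u ∈ Z)
    (hZ : ∀ v ∈ Z, (H.arrows u v).Nonempty) (hgt : α.IsGroupTypeAt H u) {c : S}
    (hc : c ∈ α.grpInvSet u (H.arrows u u)) :
    ∃ c' ∈ α.invSet (restrictTo H Z) ∩ α.partSet Z, c' * α.e (𝟙 u) = c := by
  classical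
  obtain ⟨σ, hσH, hσu, hσe⟩ := hgt
  set t : Obj → S := fun v => if hv : v ∈ Z then α.act (σ v (hZ v hv)) c else 0
  have ht : ∀ v, t v * α.e (𝟙 v) = t v := fun v => by
    by_cases hv : v ∈ Z
    · simp only [t, dif_pos hv]
      rw [← (hσe v (hZ v hv)).2, α.act_mem]
    · simp only [t, dif_neg hv, zero_mul]
  have hcomp : ∀ v (hv : v ∈ Z), (∑ w, t w) * α.e (𝟙 v) = α.act (σ v (hZ v hv)) c :=
    fun v hv => by rw [α.sum_mul_e ho t ht]; simp only [t, dif_pos hv]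
  refine ⟨∑ w, t w, ⟨?_, fun v hv => by rw [α.sum_mul_e ho t ht]; simp only [t, dif_neg hv]⟩, ?_⟩
  · rintro a b h ⟨hh, ha, hb⟩
    have hloop := H.mul (hσH a (hZ a ha)) (H.mul hh (H.inv (hσH b (hZ b hb))))
    calc α.act h (∑ w, t w) = α.act h (α.act (σ a (hZ a ha)) c) := by
          rw [← α.act_mul_e_src, hcomp a ha]
      _ = α.act (σ b (hZ b hb)) c * α.e h :=
          α.act_act_eq_of_fixed_loop _ _ h (hσe a _).2 (hσe b _).2 (hc.2 _ hloop)
      _ = (∑ w, t w) * α.e h := by rw [← hcomp b hb, α.mul_e_tgt_mul_e]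
  · rw [hcomp u hu, hσu, α.act_id, hc.1]

lemma sum_add_mul_unitOn (hsum : ∑ u : Obj, α.e (𝟙 u) = 1)
    (ho : OrthogonalIdempotents fun u : Obj => α.e (𝟙 u)) (hY : IsComponentDecomposition H Y)
    {y : ι → Obj} (hy : ∀ j, y j ∈ Y j) (hc : ∀ k, c k ∈ α.partSet (Y k))
    (hd : d ∈ α.partSet H.objsᶜ) :
    ((∑ j, c j) + d) * α.unitOn (Set.range y ∪ H.objsᶜ) = (∑ j, c j * α.e (𝟙 (y j))) + d := by
  have hcy : ∀ k, c k * α.e (𝟙 (y k)) ∈ α.partSet {y k} :=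
    fun k => α.mul_e_mem_partSet_singleton ho _ _
  refine α.eq_of_forall_mul_e_eq hsum fun v => ?_
  by_cases hv : v ∈ H.objs
  · obtain ⟨j, hj⟩ := hY.exists_mem v hv
    have hvk : ∀ k, k ≠ j → v ∉ ({y k} : Set Obj) := by
      rintro k hk rfl
      exact hk (hY.eq_of_mem (hy k) hj)
    rw [add_mul _ d (α.e (𝟙 v)), α.sum_mul_e_of_mem hcy hvk, hd v (not_not_intro hv), add_zero]
    by_cases hvj : v = y j
    · subst hvj
      rw [α.mul_unitOn_mul_e_of_mem ho (Or.inl ⟨j, rfl⟩), α.sum_add_mul_e_of_mem hY hc hd hj,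
        mul_assoc, α.idem]
    · have hvZ : v ∉ Set.range y ∪ H.objsᶜ := by
        rintro (⟨k, rfl⟩ | hv')
        · exact hvj (congrArg y (hY.eq_of_mem (hy k) hj))
        · exact hv' hv
      rw [α.mul_unitOn_mul_e_of_notMem ho hvZ, hcy j v hvj]
  · have hvy : ∀ k, v ∉ ({y k} : Set Obj) := by
      rintro k rfl
      exact hv (hY.subset_objs k (hy k))
    rw [α.mul_unitOn_mul_e_of_mem ho (Or.inr hv), α.sum_add_mul_e_of_notMem hY hc hv, add_mul,
      α.sum_mul_e_of_forall_notMem hcy hvy, zero_add]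

theorem bijOn_mul_unitOn (hsum : ∑ u : Obj, α.e (𝟙 u) = 1)
    (ho : OrthogonalIdempotents fun u : Obj => α.e (𝟙 u)) (hY : IsComponentDecomposition H Y)
    {y : ι → Obj} (hy : ∀ j, y j ∈ Y j) (hgt : α.IsGroupType H) :
    Set.BijOn (· * α.unitOn (Set.range y ∪ H.objsᶜ)) (α.invSet H)
      {s : S | ∃ (c : ι → S) (d : S), (∀ j, c j ∈ α.grpInvSet (y j) (H.arrows (y j) (y j))) ∧
        d ∈ α.partSet H.objsᶜ ∧ s = (∑ j, c j) + d} := by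
  have hyH : ∀ j, y j ∈ H.objs := fun j => hY.subset_objs j (hy j)
  refine ⟨?_, ?_, ?_⟩
  · rw [α.invSet_eq_sum_components hsum ho hY]
    rintro _ ⟨c, d, hc, hd, rfl⟩
    exact ⟨fun j => c j * α.e (𝟙 (y j)), d, fun j => α.mul_e_mem_grpInvSet (hy j) (hc j).1, hd,
      α.sum_add_mul_unitOn hsum ho hY hy (fun j => (hc j).2) hd⟩
  · intro s hs t ht hst
    have hZ : ∀ v ∈ Set.range y ∪ H.objsᶜ, s * α.e (𝟙 v) = t * α.e (𝟙 v) := fun v hv => by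
      simpa only [α.mul_unitOn_mul_e_of_mem ho hv] using congrArg (· * α.e (𝟙 v)) hst
    refine α.eq_of_forall_mul_e_eq hsum fun v => ?_
    by_cases hv : v ∈ H.objs
    · obtain ⟨j, hj⟩ := hY.exists_mem v hv
      obtain ⟨σ, hσH, -, hσe⟩ := hgt (y j) (hyH j)
      have hσv := hY.nonempty_arrows j _ (hy j) v hj
      rw [α.mul_e_eq_act_of_mem_invSet hs (hσH v hσv) (hσe v hσv).2,
        α.mul_e_eq_act_of_mem_invSet ht (hσH v hσv) (hσe v hσv).2, hZ _ (Or.inl ⟨j, rfl⟩)]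
    · exact hZ v (Or.inr hv)
  · rintro _ ⟨c, d, hc, hd, rfl⟩
    have hlift : ∀ j, ∃ c' ∈ α.invSet (restrictTo H (Y j)) ∩ α.partSet (Y j),
        c' * α.e (𝟙 (y j)) = c j := fun j =>
      α.exists_mem_invSet_restrictTo_mul_e_eq ho (hy j) (hY.nonempty_arrows j _ (hy j))
        (hgt _ (hyH j)) (hc j)
    choose c' hc' hc'y using hlift
    refine ⟨(∑ j, c' j) + d, ?_, ?_⟩
    · rw [α.invSet_eq_sum_components hsum ho hY]
      exact ⟨c', d, hc', hd, rfl⟩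
    · simp only [α.sum_add_mul_unitOn hsum ho hY hy (fun j => (hc' j).2) hd, hc'y]

end Components

end UPA

/-- **Corollary 3.5.**  Standing hypotheses as before.  Let `ℋ ∈ Sub_gt(𝒢)` have
decomposition into connected components `ℋ = ℋ₁ ∪̇ … ∪̇ ℋ_r`, `ℋ_j` the full subgroupoid
of `ℋ` on `Y_j`, with `ℋ₀ = Y₁ ∪̇ … ∪̇ Y_r`, and choose `y_j ∈ Y_j`.  Then
`S^{α_ℋ} = (⊕_{j=1}^r S_j^{α_{ℋ_j}}) ⊕ S^c_ℋ` (where `S_j = ⊕_{y ∈ Y_j} S_y` and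
`S^c_ℋ = ⊕_{y ∉ ℋ₀} S_y`), and this ring is isomorphic (by an additive and multiplicative
bijection) to `(⊕_{j=1}^r S_{y_j}^{α_{ℋ_j(y_j)}}) ⊕ S^c_ℋ`. -/
theorem invariants_decomposition
    {Obj : Type*} [Groupoid Obj] [Fintype Obj] [∀ a b : Obj, Finite (a ⟶ b)]
    {S : Type*} [CommRing S] (α : UPA Obj S)
    (hsum : ∑ y : Obj, α.e (𝟙 y) = 1)
    (horth : ∀ y z : Obj, y ≠ z → α.e (𝟙 y) * α.e (𝟙 z) = 0)
    (hconn : ∀ a b : Obj, Nonempty (a ⟶ b))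
    (x : Obj) (τ : ∀ y : Obj, x ⟶ y) (hτx : τ x = 𝟙 x)
    (hgt : ∀ y : Obj, α.e (Groupoid.inv (τ y)) = α.e (𝟙 x) ∧ α.e (τ y) = α.e (𝟙 y))
    (H : Subgroupoid Obj) (hHgt : α.IsGroupType H)
    (r : ℕ) (Y : Fin r → Set Obj)
    (hYobjs : ∀ j, Y j ⊆ H.objs)
    (hYcover : ∀ u ∈ H.objs, ∃ j, u ∈ Y j)
    (hYconn : ∀ j, ∀ u ∈ Y j, ∀ v ∈ Y j, (H.arrows u v).Nonempty)
    (hYdisj : ∀ j k, j ≠ k → ∀ u ∈ Y j, ∀ v ∈ Y k, H.arrows u v = ∅)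
    (y : Fin r → Obj) (hy : ∀ j, y j ∈ Y j) :
    (α.invSet H =
      {s : S | ∃ (c : Fin r → S) (d : S),
        (∀ j, c j ∈ α.invSet (restrictTo H (Y j)) ∩ α.partSet (Y j)) ∧
        d ∈ α.partSet {u : Obj | u ∉ H.objs} ∧
        s = (∑ j, c j) + d}) ∧
    (∃ f : S → S,
      Set.BijOn f (α.invSet H)
        {s : S | ∃ (c : Fin r → S) (d : S),
          (∀ j, c j ∈ α.grpInvSet (y j) (H.arrows (y j) (y j))) ∧
          d ∈ α.partSet {u : Obj | u ∉ H.objs} ∧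
          s = (∑ j, c j) + d} ∧
      (∀ a b : S, a ∈ α.invSet H → b ∈ α.invSet H → f (a + b) = f a + f b) ∧
      (∀ a b : S, a ∈ α.invSet H → b ∈ α.invSet H → f (a * b) = f a * f b)) := by
  have ho : OrthogonalIdempotents fun u : Obj => α.e (𝟙 u) :=
    ⟨fun u => α.idem (𝟙 u), fun u v huv => horth u v huv⟩
  have hY : IsComponentDecomposition H Y := ⟨hYobjs, hYcover, hYconn, hYdisj⟩
  set E := α.unitOn (Set.range y ∪ H.objsᶜ)
  refine ⟨α.invSet_eq_sum_components hsum ho hY, (· * E),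
    α.bijOn_mul_unitOn hsum ho hY hy hHgt, fun a b _ _ => add_mul a b E, fun a b _ _ => ?_⟩
  change a * b * E = a * E * (b * E)
  rw [mul_mul_mul_comm, α.unitOn_mul_self ho]

end PaperGalois
end
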